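/- The vertex-edge coloring number of complete graphs is unbounded: for every s ∈ ℕ there exists n ∈ ℕ such that col_ve(K_n) ≥ s, where K_n denotes the complete graph on n vertices. -/

import Mathlib

/-!
Bob plays a levelled pairing strategy on `K_n` with `n ≥ 4 ^ t`, keeping one reserve vertex
aside. At level `k` he holds a set `P` of live, pairwise non-adjacent vertices of degree `k` and
joins two of them; once `P` is used up, one live endpoint of each pairing edge is promoted to
level `k + 1`. Weighting a level-`k` vertex by `4 ^ k`, each of Alice's marks is paid for by
Bob's next pairing, so some vertex survives to level `t - 1`; Bob then joins it to the reserve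
vertex and creates an unmarked vertex of degree `t`.

Since Bob only has to preserve an invariant of the position, his strategy is obtained by choice
from the one-round step; the invariant cannot last forever because every round uses up an edge.
-/

namespace VEGame

open Classical


variable {V : Type*}

/-- The set of vertices marked after Alice's first `r` moves. -/
def mVerts (a : ℕ → V) (r : ℕ) : Set V := {v | ∃ i < r, a i = v}

/-- The set of edges marked after Bob's first `r` moves. -/
def mEdges (b : ℕ → Sym2 V) (r : ℕ) : Set (Sym2 V) := {e | ∃ i < r, b i = e}

/-- Alice's sequence of moves is legal: whenever an unmarked vertex remains, she
marks a previously unmarked vertex.  (If no unmarked vertex remains the game has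
ended; the remaining values of `a` are irrelevant, as they do not change the set
of marked vertices.) -/
def AliceLegal (a : ℕ → V) : Prop :=
  ∀ r, (∃ v, v ∉ mVerts a r) → a r ∉ mVerts a r

/-- Bob's sequence of moves is legal: whenever an unmarked edge of `G` remains,
he marks a previously unmarked edge of `G`. -/
def BobLegal (G : SimpleGraph V) (b : ℕ → Sym2 V) : Prop :=
  ∀ r, (∃ e ∈ G.edgeSet, e ∉ mEdges b r) → b r ∈ G.edgeSet ∧ b r ∉ mEdges b r

/-- The score of vertex `v` at the end of round `r` (rounds are numbered from 0):
`0` if `v` is marked, and otherwise the number of marked edges incident to `v`. -/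
noncomputable def score (G : SimpleGraph V) (a : ℕ → V) (b : ℕ → Sym2 V)
    (r : ℕ) (v : V) : ℕ∞ :=
  if v ∈ mVerts a (r + 1) then 0
  else {e | e ∈ G.edgeSet ∧ v ∈ e ∧ e ∈ mEdges b (r + 1)}.encard

/-- `a` is the sequence of Alice's moves when she follows strategy `A`
(a function of the history, i.e. of Bob's moves so far). -/
def ConsistentA (A : List (Sym2 V) → V) (a : ℕ → V) (b : ℕ → Sym2 V) : Prop :=
  ∀ r, a r = A (List.ofFn fun i : Fin r => b i)

/-- `b` is the sequence of Bob's moves when he follows strategy `B`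
(a function of the history, i.e. of Alice's moves so far). -/
def ConsistentB (B : List V → Sym2 V) (a : ℕ → V) (b : ℕ → Sym2 V) : Prop :=
  ∀ r, b r = B (List.ofFn fun i : Fin (r + 1) => a i)

/-- Bob has a winning strategy for score `s`: a legal strategy which, against
every legal play of Alice, forces some round and some vertex to have score at
least `s`. -/
def BobWins (G : SimpleGraph V) (s : ℕ) : Prop :=
  ∃ B : List V → Sym2 V,
    (∀ a b, ConsistentB B a b → AliceLegal a → BobLegal G b) ∧
    (∀ a b, ConsistentB B a b → AliceLegal a →
      ∃ r v, (s : ℕ∞) ≤ score G a b r v)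

/-- The vertex-edge coloring number of `G`: one plus the supremum of all scores
for which Bob has a winning strategy. -/
noncomputable def colVE (G : SimpleGraph V) : ℕ∞ :=
  (⨆ s ∈ {s : ℕ | BobWins G s}, (s : ℕ∞)) + 1

end VEGame

namespace VEGame

open Finset

variable {V : Type*}

lemma setOf_exists_lt_succ {α : Type*} (f : ℕ → α) (r : ℕ) :
    {x | ∃ i < r + 1, f i = x} = insert (f r) {x | ∃ i < r, f i = x} := by
  ext x
  simp only [Set.mem_ofPred_eq, Set.mem_insert_iff, Nat.lt_succ_iff_lt_or_eq, or_and_right,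
    exists_or, exists_eq_left, eq_comm (a := x), or_comm]

lemma mVerts_succ (a : ℕ → V) (r : ℕ) : mVerts a (r + 1) = insert (a r) (mVerts a r) :=
  setOf_exists_lt_succ a r

lemma mEdges_succ (b : ℕ → Sym2 V) (r : ℕ) : mEdges b (r + 1) = insert (b r) (mEdges b r) :=
  setOf_exists_lt_succ b r

lemma BobWins.le_colVE {G : SimpleGraph V} {s : ℕ} (h : BobWins G s) :
    (s : ℕ∞) + 1 ≤ colVE G := by
  rw [colVE]
  gcongr
  exact le_biSup (f := fun s : ℕ => (s : ℕ∞)) h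

variable [DecidableEq V]

def degreeIn (H : Finset (Sym2 V)) (v : V) : ℕ := #{e ∈ H | v ∈ e}

section Degree

variable {H H' : Finset (Sym2 V)} {e : Sym2 V} {x : V}

lemma degreeIn_mono (h : H ⊆ H') : degreeIn H x ≤ degreeIn H' x :=
  card_le_card (filter_subset_filter _ h)

lemma degreeIn_insert (he : e ∉ H) (hx : x ∈ e) :
    degreeIn (insert e H) x = degreeIn H x + 1 := by
  rw [degreeIn, filter_insert, if_pos hx, card_insert_of_notMem (fun h => he (mem_filter.1 h).1)]
  rfl

lemma mem_insert_mk_cases {u v y : V} (h : s(x, y) ∈ insert s(u, v) H) :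
    (x = u ∨ x = v) ∨ s(x, y) ∈ H :=
  (mem_insert.1 h).imp (fun h' : s(x, y) = s(u, v) => Sym2.mem_iff.1 (h' ▸ Sym2.mem_mk_left x y))
    id

end Degree

def ScoreReached (s : ℕ) (A : Finset V) (H : Finset (Sym2 V)) : Prop :=
  ∃ v ∉ A, s ≤ degreeIn H v

structure Position (V : Type*) where
  marked : Finset V
  edges : Finset (Sym2 V)

section Strategy

variable (G : SimpleGraph V) (s : ℕ) (I : Finset V → Finset (Sym2 V) → Prop)

def IsFresh (H : Finset (Sym2 V)) (e : Sym2 V) : Prop := e ∈ G.edgeSet ∧ e ∉ H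

def IsGood (A : Finset V) (H : Finset (Sym2 V)) (e : Sym2 V) : Prop :=
  I A (insert e H) ∨ ScoreReached s A (insert e H)

open Classical in
noncomputable def respond (p : Position V) (x : V) : Sym2 V :=
  if h : ∃ e, IsFresh G p.edges e ∧ IsGood s I (insert x p.marked) p.edges e then h.choose
  else if h' : ∃ e, IsFresh G p.edges e then h'.choose else s(x, x)

lemma respond_isFresh {p : Position V} {x : V} (h : ∃ e, IsFresh G p.edges e) :
    IsFresh G p.edges (respond G s I p x) := by
  unfold respond
  split_ifs with hg
  · exact hg.choose_spec.1
  · exact h.choose_spec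

lemma respond_isGood {p : Position V} {x : V}
    (h : ∃ e, IsFresh G p.edges e ∧ IsGood s I (insert x p.marked) p.edges e) :
    IsGood s I (insert x p.marked) p.edges (respond G s I p x) := by
  rw [respond, dif_pos h]
  exact h.choose_spec.2

noncomputable def Position.next (p : Position V) (x : V) : Position V :=
  ⟨insert x p.marked, insert (respond G s I p x) p.edges⟩

noncomputable def strategy [Nonempty V] (l : List V) : Sym2 V :=
  respond G s I (l.dropLast.foldl (Position.next G s I) ⟨∅, ∅⟩)
    (l.getLastD (Classical.arbitrary V))

noncomputable def play (a : ℕ → V) (r : ℕ) : Position V :=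
  (List.ofFn fun i : Fin r => a i).foldl (Position.next G s I) ⟨∅, ∅⟩

variable {G s I}

lemma play_succ (a : ℕ → V) (r : ℕ) :
    play G s I a (r + 1) = (play G s I a r).next G s I (a r) := by
  rw [play, List.ofFn_succ', List.concat_eq_append, List.foldl_concat]
  rfl

lemma strategy_ofFn [Nonempty V] (a : ℕ → V) (r : ℕ) :
    strategy G s I (List.ofFn fun i : Fin (r + 1) => a i) =
      respond G s I (play G s I a r) (a r) := by
  rw [strategy, List.ofFn_succ', List.concat_eq_append, List.dropLast_concat, List.getLastD_concat]
  rfl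

lemma coe_play_marked (a : ℕ → V) (r : ℕ) : ↑(play G s I a r).marked = mVerts a r := by
  induction r with
  | zero => ext; simp [play, mVerts]
  | succ r ih => rw [play_succ, mVerts_succ, ← ih]; simp [Position.next]

variable {a : ℕ → V} {b : ℕ → Sym2 V}

lemma score_eq_degreeIn {r : ℕ} {A : Finset V} {H : Finset (Sym2 V)}
    (hA : mVerts a (r + 1) = ↑A) (hH : mEdges b (r + 1) = ↑H) (hG : ↑H ⊆ G.edgeSet)
    {v : V} (hv : v ∉ A) : score G a b r v = degreeIn H v := by
  rw [score, if_neg (by rw [hA]; exact_mod_cast hv), degreeIn,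
    ← Set.encard_coe_eq_coe_finsetCard, hH, coe_filter]
  congr 1
  ext e
  simp only [Set.mem_ofPred_eq, Finset.mem_coe]
  exact ⟨fun h => ⟨h.2.2, h.2.1⟩, fun h => ⟨hG h.1, h.2, h.1⟩⟩

variable [Nonempty V]

lemma coe_play_edges (hb : ConsistentB (strategy G s I) a b) (r : ℕ) :
    ↑(play G s I a r).edges = mEdges b r := by
  induction r with
  | zero => ext; simp [play, mEdges]
  | succ r ih => rw [play_succ, mEdges_succ, ← ih, hb, strategy_ofFn]; simp [Position.next]

lemma bobLegal_strategy (hb : ConsistentB (strategy G s I) a b) : BobLegal G b := by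
  intro r hfresh
  rw [← coe_play_edges hb, hb, strategy_ofFn] at *
  exact respond_isFresh G s I (by simpa [IsFresh] using hfresh)

lemma play_step (hstep : ∀ A H x, I A H → ∃ e, IsFresh G H e ∧ IsGood s I (insert x A) H e)
    (hb : ConsistentB (strategy G s I) a b) {r : ℕ} (hG : ↑(play G s I a r).edges ⊆ G.edgeSet)
    (hI : I (play G s I a r).marked (play G s I a r).edges) :
    (↑(play G s I a (r + 1)).edges ⊆ G.edgeSet ∧
      #(play G s I a (r + 1)).edges = #(play G s I a r).edges + 1 ∧
      I (play G s I a (r + 1)).marked (play G s I a (r + 1)).edges) ∨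
    ∃ v, (s : ℕ∞) ≤ score G a b r v := by
  have hmove := hstep _ _ (a r) hI
  have hfresh := respond_isFresh G s I (x := a r) (hmove.imp fun _ h => h.1)
  have hgood := respond_isGood G s I hmove
  have hA := coe_play_marked (G := G) (s := s) (I := I) a (r + 1)
  have hH := coe_play_edges hb (r + 1)
  rw [play_succ, Position.next] at hA hH ⊢
  have hG' : ↑(insert (respond G s I (play G s I a r) (a r)) (play G s I a r).edges) ⊆
      G.edgeSet := by
    rw [coe_insert]
    exact Set.insert_subset hfresh.1 hG
  rcases hgood with hI' | ⟨v, hv, hdeg⟩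
  · exact Or.inl ⟨hG', card_insert_of_notMem hfresh.2, hI'⟩
  · refine Or.inr ⟨v, ?_⟩
    rw [score_eq_degreeIn hA.symm hH.symm hG' hv]
    exact_mod_cast hdeg

theorem bobWins_of_invariant [Fintype V] (h0 : I ∅ ∅)
    (hstep : ∀ A H x, I A H → ∃ e, IsFresh G H e ∧ IsGood s I (insert x A) H e) :
    BobWins G s := by
  refine ⟨strategy G s I, fun a b hb _ => bobLegal_strategy hb, fun a b hb _ => ?_⟩
  have hplay : ∀ r, (↑(play G s I a r).edges ⊆ G.edgeSet ∧ #(play G s I a r).edges = r ∧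
      I (play G s I a r).marked (play G s I a r).edges) ∨
      ∃ r v, (s : ℕ∞) ≤ score G a b r v := by
    intro r
    induction r with
    | zero => exact Or.inl ⟨by simp [play], by simp [play], h0⟩
    | succ r ih =>
      obtain ⟨hG, hcard, hI⟩ | hwin := ih
      · obtain ⟨hG', hcard', hI'⟩ | ⟨v, hv⟩ := play_step hstep hb hG hI
        · exact Or.inl ⟨hG', by rw [hcard', hcard], hI'⟩
        · exact Or.inr ⟨r, v, hv⟩
      · exact Or.inr hwin
  obtain ⟨-, hcard, hI⟩ | hwin := hplay (Fintype.card (Sym2 V))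
  · obtain ⟨e, ⟨-, he⟩, -⟩ := hstep _ _ (a 0) hI
    exact absurd (eq_univ_of_card _ hcard ▸ mem_univ e) he
  · exact hwin

end Strategy

/-- A graph of maximum degree at most one has an independent set containing half its vertices. -/
lemma exists_independent_half (H : Finset (Sym2 V)) (hloop : ∀ x, s(x, x) ∉ H) (S : Finset V)
    (hS : ∀ x ∈ S, ∀ y ∈ S, ∀ z ∈ S, s(x, y) ∈ H → s(x, z) ∈ H → y = z) :
    ∃ T ⊆ S, (∀ x ∈ T, ∀ y ∈ T, s(x, y) ∉ H) ∧ #S ≤ 2 * #T := by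
  induction S using Finset.strongInduction with
  | H S ih =>
  rcases S.eq_empty_or_nonempty with rfl | ⟨v, hv⟩
  · exact ⟨∅, by simp⟩
  set N := {y ∈ S | s(v, y) ∈ H}
  have hN : #N ≤ 1 := card_le_one.2 fun y hy z hz =>
    hS v hv y (mem_filter.1 hy).1 z (mem_filter.1 hz).1 (mem_filter.1 hy).2 (mem_filter.1 hz).2
  have hsub : S.erase v \ N ⊆ S := sdiff_subset.trans (erase_subset v S)
  obtain ⟨T, hTS, hT, hcard⟩ :=
    ih _ (Finset.ssubset_of_subset_of_ssubset sdiff_subset (erase_ssubset hv))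
      fun x hx y hy z hz => hS x (hsub hx) y (hsub hy) z (hsub hz)
  have hvy : ∀ y ∈ T, s(v, y) ∉ H := fun y hy h =>
    (mem_sdiff.1 (hTS hy)).2 (mem_filter.2 ⟨mem_of_mem_erase (mem_sdiff.1 (hTS hy)).1, h⟩)
  have hvT : v ∉ T := fun h => (mem_sdiff.1 (hTS h)).1 |> notMem_erase v S
  refine ⟨insert v T, insert_subset hv (hTS.trans hsub), ?_, ?_⟩
  · intro x hx y hy
    rcases mem_insert.1 hx with rfl | hxT
    · rcases mem_insert.1 hy with rfl | hyT
      · exact hloop _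
      · exact hvy y hyT
    · rcases mem_insert.1 hy with rfl | hyT
      · exact Sym2.eq_swap (a := x) ▸ hvy x hxT
      · exact hT x hxT y hyT
  · have := card_le_card_sdiff_add_card (s := S.erase v) (t := N)
    have := card_erase_add_one hv
    rw [card_insert_of_notMem hvT]
    omega

section CompleteGraph

variable {w : V} {A : Finset V} {H : Finset (Sym2 V)} {k t : ℕ} {P M : Finset V}

/-- Bob's bookkeeping at level `k`: `P` holds the unpaired vertices of the level, `M` those that
Bob has already paired. The reserve vertex `w` is never touched, so every vertex of `P ∪ M` can
still be joined to it by a fresh edge. -/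
structure LevelConfig (w : V) (A : Finset V) (H : Finset (Sym2 V)) (k : ℕ) (P M : Finset V) :
    Prop where
  loopless : ∀ x, s(x, x) ∉ H
  reserve_fresh : ∀ e ∈ H, w ∉ e
  reserve_notMem : w ∉ P ∪ M
  disjoint_marked : Disjoint P A
  disjoint : Disjoint P M
  degree_P : ∀ x ∈ P, k ≤ degreeIn H x
  degree_M : ∀ x ∈ M, k + 1 ≤ degreeIn H x
  isolated_P : ∀ x ∈ P, ∀ y ∈ P ∪ M, s(x, y) ∉ H
  matching_M : ∀ x ∈ M, ∀ y ∈ M, ∀ z ∈ M, s(x, y) ∈ H → s(x, z) ∈ H → y = z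

/-- A vertex of `P` is worth `4 ^ k` and a live vertex of `M` is worth `2 * 4 ^ k`; the slack
`c`, in units of `4 ^ k`, is `2` between rounds and `4` right after Alice's mark. Her mark costs
at most `2 * 4 ^ k`, Bob's pairing of two vertices of `P` gains `2 * 4 ^ k`, and promoting `M` to
level `k + 1` loses nothing, since half of its live vertices survive at four times the weight. -/
def Viable (t : ℕ) (w : V) (c : ℕ) (A : Finset V) (H : Finset (Sym2 V)) : Prop :=
  ∃ k P M, k < t ∧ LevelConfig w A H k P M ∧ 4 ^ t < 4 ^ k * (#P + 2 * #(M \ A) + c)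

namespace LevelConfig

lemma mark (hc : LevelConfig w A H k P M) (x : V) :
    LevelConfig w (insert x A) H k (P.erase x) M where
  loopless := hc.loopless
  reserve_fresh := hc.reserve_fresh
  reserve_notMem h := hc.reserve_notMem (union_subset_union (erase_subset x P) subset_rfl h)
  disjoint_marked := by
    rw [disjoint_insert_right]
    exact ⟨notMem_erase x P, hc.disjoint_marked.mono_left (erase_subset x P)⟩
  disjoint := hc.disjoint.mono_left (erase_subset x P)
  degree_P y hy := hc.degree_P y (mem_of_mem_erase hy)
  degree_M := hc.degree_M
  isolated_P y hy z hz :=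
    hc.isolated_P y (mem_of_mem_erase hy) z (union_subset_union (erase_subset x P) subset_rfl hz)
  matching_M := hc.matching_M

lemma potential_mark (hc : LevelConfig w A H k P M) (x : V) :
    #P + 2 * #(M \ A) ≤ #(P.erase x) + 2 * #(M \ insert x A) + 2 := by
  have hM : M \ insert x A = (M \ A).erase x := by ext; simp [and_comm, and_assoc]
  rw [hM]
  by_cases hx : x ∈ P
  · have hxM : x ∉ M \ A := fun h => disjoint_left.1 hc.disjoint hx (mem_sdiff.1 h).1
    rw [erase_eq_of_notMem hxM]
    have := card_erase_add_one hx
    omega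
  · rw [erase_eq_of_notMem hx]
    have := pred_card_le_card_erase (s := M \ A) (a := x)
    omega

lemma promote (hc : LevelConfig w A H k P M) :
    ∃ P', LevelConfig w A H (k + 1) P' ∅ ∧ #(M \ A) ≤ 2 * #P' := by
  obtain ⟨T, hTM, hT, hcard⟩ := exists_independent_half H hc.loopless (M \ A)
    fun x hx y hy z hz =>
      hc.matching_M x (mem_sdiff.1 hx).1 y (mem_sdiff.1 hy).1 z (mem_sdiff.1 hz).1
  have hTM' : T ⊆ M := hTM.trans sdiff_subset
  refine ⟨T, ⟨hc.loopless, hc.reserve_fresh, ?_, ?_, disjoint_empty_right T,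
    fun x hx => hc.degree_M x (hTM' hx), by simp, ?_, by simp⟩, hcard⟩
  · rw [union_empty]
    exact fun h => hc.reserve_notMem (mem_union_right P (hTM' h))
  · exact disjoint_left.2 fun x hx => (mem_sdiff.1 (hTM hx)).2
  · intro x hx y hy
    exact hT x hx y (by simpa using hy)

lemma pair_matching (hc : LevelConfig w A H k P M) {u v : V} (hu : u ∈ P) (hv : v ∈ P) :
    ∀ x ∈ insert u (insert v M), ∀ y ∈ insert u (insert v M),
      ∀ z ∈ insert u (insert v M),
        s(x, y) ∈ insert s(u, v) H → s(x, z) ∈ insert s(u, v) H → y = z := by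
  have hM' : ∀ {y}, y ∈ insert u (insert v M) → y ∈ P ∪ M := fun hy => by
    rcases mem_insert.1 hy with rfl | hy
    · exact mem_union_left M hu
    rcases mem_insert.1 hy with rfl | hy
    · exact mem_union_left M hv
    · exact mem_union_right P hy
  intro x hx y hy z hz hxy hxz
  by_cases hxP : x ∈ P
  · have hpair : ∀ {y}, y ∈ insert u (insert v M) → s(x, y) ∈ insert s(u, v) H →
        s(x, y) = s(u, v) := fun hy h =>
      (mem_insert.1 h).resolve_right (hc.isolated_P x hxP _ (hM' hy))
    exact Sym2.congr_right.1 ((hpair hy hxy).trans (hpair hz hxz).symm)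
  have hxM : x ∈ M := (mem_union.1 (hM' hx)).resolve_left hxP
  have hold : ∀ {y}, y ∈ insert u (insert v M) → s(x, y) ∈ insert s(u, v) H →
      y ∈ M ∧ s(x, y) ∈ H := by
    intro y hy h
    have hH : s(x, y) ∈ H :=
      (mem_insert_mk_cases h).resolve_left (by rintro (rfl | rfl) <;> contradiction)
    refine ⟨(mem_union.1 (hM' hy)).resolve_left fun hyP => ?_, hH⟩
    exact hc.isolated_P y hyP x (mem_union_right P hxM) (Sym2.eq_swap ▸ hH)
  exact hc.matching_M x hxM y (hold hy hxy).1 z (hold hz hxz).1 (hold hy hxy).2 (hold hz hxz).2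

lemma pair (hc : LevelConfig w A H k P M) {u v : V} (hu : u ∈ P) (hv : v ∈ P) (huv : u ≠ v) :
    LevelConfig w A (insert s(u, v) H) k ((P.erase u).erase v) (insert u (insert v M)) := by
  have huvH : s(u, v) ∉ H := hc.isolated_P u hu v (mem_union_left M hv)
  have hsub : (P.erase u).erase v ∪ insert u (insert v M) ⊆ P ∪ M :=
    union_subset ((erase_subset v _).trans ((erase_subset u P).trans subset_union_left))
      (insert_subset (mem_union_left M hu) (insert_subset (mem_union_left M hv) subset_union_right))
  have hP' : ∀ {x}, x ∈ (P.erase u).erase v → x ≠ u ∧ x ≠ v ∧ x ∈ P := fun hx =>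
    ⟨ne_of_mem_erase (mem_of_mem_erase hx), ne_of_mem_erase hx,
      mem_of_mem_erase (mem_of_mem_erase hx)⟩
  refine ⟨fun x h => ?_, fun e he => ?_, fun h => hc.reserve_notMem (hsub h),
    hc.disjoint_marked.mono_left ((erase_subset v _).trans (erase_subset u P)), ?_,
    fun x hx => (hc.degree_P x (hP' hx).2.2).trans (degreeIn_mono (subset_insert _ _)),
    fun x hx => ?_, fun x hx y hy h => ?_, hc.pair_matching hu hv⟩
  · rcases mem_insert.1 h with h | h
    · exact huv ((Sym2.eq_iff.1 h).elim (fun h => h.1.symm.trans h.2) fun h => h.2.symm.trans h.1)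
    · exact hc.loopless x h
  · rcases mem_insert.1 he with rfl | he
    · rw [Sym2.mem_iff]
      rintro (rfl | rfl)
      exacts [hc.reserve_notMem (mem_union_left M hu), hc.reserve_notMem (mem_union_left M hv)]
    · exact hc.reserve_fresh e he
  · refine disjoint_left.2 fun x hx hxM => ?_
    obtain ⟨hxu, hxv, hxP⟩ := hP' hx
    rcases mem_insert.1 hxM with rfl | hxM
    · exact hxu rfl
    rcases mem_insert.1 hxM with rfl | hxM
    · exact hxv rfl
    exact disjoint_left.1 hc.disjoint hxP hxM
  · rcases mem_insert.1 hx with rfl | hx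
    · rw [degreeIn_insert huvH (Sym2.mem_mk_left x v)]
      exact Nat.succ_le_succ (hc.degree_P x hu)
    rcases mem_insert.1 hx with rfl | hx
    · rw [degreeIn_insert huvH (Sym2.mem_mk_right u x)]
      exact Nat.succ_le_succ (hc.degree_P x hv)
    exact (hc.degree_M x hx).trans (degreeIn_mono (subset_insert _ _))
  · obtain ⟨hxu, hxv, hxP⟩ := hP' hx
    rcases mem_insert_mk_cases h with (rfl | rfl) | h
    exacts [hxu rfl, hxv rfl, hc.isolated_P x hxP y (hsub hy) h]

lemma potential_pair (hc : LevelConfig w A H k P M) {u v : V} (hu : u ∈ P) (hv : v ∈ P)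
    (huv : u ≠ v) :
    #((P.erase u).erase v) + 2 * #(insert u (insert v M) \ A) + 2 = #P + 2 * #(M \ A) + 4 := by
  have hA : ∀ {y}, y ∈ P → y ∉ A := fun hy => disjoint_left.1 hc.disjoint_marked hy
  have hM : ∀ {y}, y ∈ P → y ∉ M := fun hy => disjoint_left.1 hc.disjoint hy
  rw [insert_sdiff_of_notMem _ (hA hu), insert_sdiff_of_notMem _ (hA hv),
    card_insert_of_notMem (by simp [huv, hM hu]), card_insert_of_notMem (by simp [hM hv]),
    card_erase_of_mem (mem_erase.2 ⟨huv.symm, hv⟩), card_erase_of_mem hu]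
  have : 1 < #P := one_lt_card.2 ⟨u, hu, v, hv, huv⟩
  omega

lemma exists_pairable_or_top (hk : k < t) (hc : LevelConfig w A H k P M)
    (hpot : 4 ^ t < 4 ^ k * (#P + 2 * #(M \ A) + 4)) :
    ∃ k' P' M', k' < t ∧ LevelConfig w A H k' P' M' ∧
      4 ^ t < 4 ^ k' * (#P' + 2 * #(M' \ A) + 4) ∧ (k' + 1 = t ∨ 2 ≤ #P') := by
  by_cases hready : k + 1 = t ∨ 2 ≤ #P
  · exact ⟨k, P, M, hk, hc, hpot, hready⟩
  obtain ⟨P', hc', hhalf⟩ := hc.promote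
  have hpot' : 4 ^ t < 4 ^ (k + 1) * (#P' + 4) :=
    calc 4 ^ t < 4 ^ k * (#P + 2 * #(M \ A) + 4) := hpot
      _ ≤ 4 ^ k * (4 * (#P' + 4)) := Nat.mul_le_mul_left _ (by omega)
      _ = 4 ^ (k + 1) * (#P' + 4) := by ring
  refine ⟨k + 1, P', ∅, by omega, hc', by simpa using hpot', ?_⟩
  -- with `M` empty, a level below `t - 1` carrying the potential has at least two vertices
  by_contra! hlow
  have h16 : 4 ^ (k + 3) = 4 ^ (k + 1) * 16 := by ring
  have htk : 4 ^ (k + 3) ≤ 4 ^ t := Nat.pow_le_pow_right (by norm_num) (by omega)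
  have hsmall : 4 ^ (k + 1) * (#P' + 4) ≤ 4 ^ (k + 1) * 5 := Nat.mul_le_mul_left _ (by omega)
  have : 0 < 4 ^ (k + 1) := by positivity
  omega

lemma exists_reached (hc : LevelConfig w A H k P M) (htop : k + 1 = t)
    (hpot : 4 ^ t < 4 ^ k * (#P + 2 * #(M \ A) + 4)) :
    ∃ e, IsFresh ⊤ H e ∧ ScoreReached t A (insert e H) := by
  obtain ⟨u, huPM, huA⟩ : ∃ u ∈ P ∪ M, u ∉ A := by
    by_contra! hdead
    have hP : P = ∅ := eq_empty_of_forall_notMem fun u hu =>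
      disjoint_left.1 hc.disjoint_marked hu (hdead u (mem_union_left M hu))
    have hM : M \ A = ∅ := eq_empty_of_forall_notMem fun u hu =>
      (mem_sdiff.1 hu).2 (hdead u (mem_union_right P (mem_sdiff.1 hu).1))
    rw [hP, hM, ← htop, pow_succ] at hpot
    simp at hpot
  have huw : u ≠ w := fun h => hc.reserve_notMem (h ▸ huPM)
  have hfresh : s(u, w) ∉ H := fun h => hc.reserve_fresh _ h (Sym2.mem_mk_right u w)
  refine ⟨s(u, w), ⟨(SimpleGraph.mem_edgeSet _).2 ((SimpleGraph.top_adj u w).2 huw), hfresh⟩,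
    u, huA, ?_⟩
  rw [degreeIn_insert hfresh (Sym2.mem_mk_left u w), ← htop]
  rcases mem_union.1 huPM with hu | hu
  · exact Nat.succ_le_succ (hc.degree_P u hu)
  · exact (hc.degree_M u hu).trans (Nat.le_succ _)

end LevelConfig

lemma Viable.mark (h : Viable t w 2 A H) (x : V) : Viable t w 4 (insert x A) H := by
  obtain ⟨k, P, M, hk, hc, hpot⟩ := h
  refine ⟨k, P.erase x, M, hk, hc.mark x, hpot.trans_le (Nat.mul_le_mul_left _ ?_)⟩
  have := hc.potential_mark x
  omega

lemma Viable.exists_good_move (h : Viable t w 2 A H) (x : V) :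
    ∃ e, IsFresh ⊤ H e ∧ IsGood t (Viable t w 2) (insert x A) H e := by
  obtain ⟨k, P, M, hk, hc, hpot⟩ := h.mark x
  obtain ⟨k, P, M, hk, hc, hpot, hready⟩ := hc.exists_pairable_or_top hk hpot
  by_cases htop : k + 1 = t
  · obtain ⟨e, he, hreach⟩ := hc.exists_reached htop hpot
    exact ⟨e, he, Or.inr hreach⟩
  obtain ⟨u, hu, v, hv, huv⟩ := one_lt_card.1 (hready.resolve_left htop)
  refine ⟨s(u, v), ⟨(SimpleGraph.mem_edgeSet _).2 ((SimpleGraph.top_adj u v).2 huv),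
    hc.isolated_P u hu v (mem_union_left M hv)⟩,
    Or.inl ⟨k, _, _, hk, hc.pair hu hv huv, ?_⟩⟩
  rwa [hc.potential_pair hu hv huv]

lemma viable_init [Fintype V] (ht : 0 < t) (hV : 4 ^ t ≤ Fintype.card V) (w : V) :
    Viable t w 2 ∅ ∅ := by
  refine ⟨0, univ.erase w, ∅, ht, by constructor <;> simp, ?_⟩
  rw [card_erase_of_mem (mem_univ w), card_univ]
  have := Fintype.card_pos_iff.2 ⟨w⟩
  simp only [pow_zero, one_mul, empty_sdiff, card_empty]
  omega

theorem bobWins_top [Fintype V] (ht : 0 < t) (hV : 4 ^ t ≤ Fintype.card V) :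
    BobWins (⊤ : SimpleGraph V) t := by
  have : Nonempty V := Fintype.card_pos_iff.1 (lt_of_lt_of_le (by positivity) hV)
  exact bobWins_of_invariant (viable_init ht hV (Classical.arbitrary V))
    fun _ _ x h => h.exists_good_move x

end CompleteGraph

end VEGame

open VEGame

/-- The vertex-edge coloring number of complete graphs is unbounded: for every `s` there
is an `n` with `col_ve(K_n) ≥ s`. -/
theorem colVE_complete_unbounded :
    ∀ s : ℕ, ∃ n : ℕ, (s : ℕ∞) ≤ colVE (⊤ : SimpleGraph (Fin n)) := by
  intro s
  refine ⟨4 ^ (s + 1), le_trans ?_ (bobWins_top s.succ_pos (Fintype.card_fin _).ge).le_colVE⟩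
  norm_cast
  omega
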